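/- arXiv:1002.1053 — 4 statements merged into one kernel-verified Lean document; each statement's English description precedes it below -/
import Mathlib

section
/- Let X, Y, H be elements of an associative algebra satisfying [H, Y] = −Y, [H, X] = X, [Y, X] = H. Suppose v is a module element with Y v = 0 and H v = (ℓ + n) v. Then for all j ≤ k, Y^j (X^k v) = c_{j,k,ℓ} X^{k−j} v, where c_{j,k,ℓ} = (1/2^j) · (k!/(k−j)!) · ((2n + 2ℓ + k − 1)!/(2n + 2ℓ + k − j − 1)!), and Y^j (X^k v) = 0 for j > k. -/
open Finset

/-!
`H` raises the eigenvalue by one along each application of `X`, so `H (X^k v) = (μ + k) X^k v`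
where `μ = ℓ + n`. Commuting `Y` through `X^k` then gives `Y (X^k v) = (k μ + C(k,2)) X^(k-1) v`,
since each of the `k` commutators contributes an eigenvalue `μ + i`. Iterating yields
`Y^j (X^k v) = ∏_{i<j} ((k-i) μ + C(k-i,2)) X^(k-j) v`, whose `i = k` factor vanishes when `k < j`,
and for `j ≤ k` the factors are `(k-i)(2μ + k-i-1)/2`.
-/

section RaisingLowering

variable {R M : Type*} [CommRing R] [AddCommGroup M] [Module R M]
  {X Y H : Module.End R M} {v : M} {μ : R}

theorem apply_pow_apply_eq_smul_pow (hHX : H * X - X * H = X) (hHv : H v = μ • v) (k : ℕ) :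
    H ((X ^ k) v) = (μ + k) • (X ^ k) v := by
  induction k with
  | zero => simpa using hHv
  | succ k ih =>
    have hHXw : H (X ((X ^ k) v)) = X (H ((X ^ k) v)) + X ((X ^ k) v) :=
      eq_add_of_sub_eq' (LinearMap.congr_fun hHX _)
    rw [pow_succ', Module.End.mul_apply, hHXw, ih, map_smul, Nat.cast_succ]
    module

theorem apply_pow_apply_eq_smul_pow_pred (hHX : H * X - X * H = X) (hYX : Y * X - X * Y = H)
    (hYv : Y v = 0) (hHv : H v = μ • v) (k : ℕ) :
    Y ((X ^ k) v) = ((k : R) * μ + k.choose 2) • (X ^ (k - 1)) v := by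
  induction k with
  | zero => simpa using hYv
  | succ k ih =>
    have hYXw : Y (X ((X ^ k) v)) = X (Y ((X ^ k) v)) + H ((X ^ k) v) :=
      eq_add_of_sub_eq' (LinearMap.congr_fun hYX _)
    rw [pow_succ', Module.End.mul_apply, hYXw, ih, map_smul,
      apply_pow_apply_eq_smul_pow hHX hHv, Nat.add_sub_cancel]
    rcases k with _ | k
    · simp
    · have hchoose : (k + 2).choose 2 = (k + 1).choose 2 + (k + 1) := by
        rw [Nat.choose_succ_succ' (k + 1) 1, Nat.choose_one_right, add_comm]
      rw [← Module.End.mul_apply, ← pow_succ', Nat.add_sub_cancel, ← add_smul, hchoose]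
      push_cast
      ring_nf

theorem pow_apply_pow_apply_eq_prod_smul_pow (hHX : H * X - X * H = X) (hYX : Y * X - X * Y = H)
    (hYv : Y v = 0) (hHv : H v = μ • v) (j k : ℕ) :
    (Y ^ j) ((X ^ k) v) =
      (∏ i ∈ range j, (((k - i : ℕ) : R) * μ + (k - i).choose 2)) • (X ^ (k - j)) v := by
  induction j with
  | zero => simp
  | succ j ih =>
    rw [pow_succ', Module.End.mul_apply, ih, map_smul,
      apply_pow_apply_eq_smul_pow_pred hHX hYX hYv hHv, smul_smul, prod_range_succ, Nat.sub_sub]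

end RaisingLowering

theorem monogenic_pow_Y_pow_X_general {M : Type*} [AddCommGroup M] [Module ℝ M]
    (X Y H : Module.End ℝ M) (n ℓ : ℕ)
    (hHX : H * X - X * H = X) (hYX : Y * X - X * Y = H)
    (v : M) (hYv : Y v = 0) (hHv : H v = ((ℓ : ℝ) + n) • v) :
    (∀ j k : ℕ, j ≤ k →
      (Y ^ j) ((X ^ k) v)
        = ((1 / 2 ^ j : ℝ) * (∏ i ∈ range j, ((k : ℝ) - i))
            * ∏ i ∈ range j, (2 * (n : ℝ) + 2 * ℓ + k - 1 - i)) • ((X ^ (k - j)) v))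
    ∧ ∀ j k : ℕ, k < j → (Y ^ j) ((X ^ k) v) = 0 := by
  have hpow := pow_apply_pow_apply_eq_prod_smul_pow hHX hYX hYv hHv
  refine ⟨fun j k hjk => ?_, fun j k hkj => ?_⟩
  · have hhalf : (1 / 2 ^ j : ℝ) = ∏ _i ∈ range j, (1 / 2 : ℝ) := by simp
    rw [hpow, hhalf, mul_assoc, ← prod_mul_distrib, ← prod_mul_distrib]
    congr 1
    refine prod_congr rfl fun i hi => ?_
    rw [Nat.cast_choose_two, Nat.cast_sub (by rw [mem_range] at hi; omega)]
    ring
  · rw [hpow, prod_eq_zero (mem_range.mpr hkj) (by simp), zero_smul]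

/-- with `X, Y, H` satisfying `[H,Y] = −Y`, `[H,X] = X`, `[Y,X] = H` and `v` a
symplectic monogenic of degree `ℓ` (`Y v = 0`, `H v = (ℓ + n) v`), one has for `j ≤ k`
`Y^j (X^k v) = c_{j,k,ℓ} X^{k−j} v` with
`c_{j,k,ℓ} = (1/2^j) · k!/(k−j)! · (2n+2ℓ+k−1)!/(2n+2ℓ+k−j−1)!`
(the factorial quotients interpreted as falling-factorial products), and
`Y^j (X^k v) = 0` for `j > k`. -/
theorem monogenic_pow_Y_pow_X {M : Type*} [AddCommGroup M] [Module ℝ M]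
    (X Y H : Module.End ℝ M) (n ℓ : ℕ) (hn : 1 ≤ n)
    (hHY : H * Y - Y * H = -Y) (hHX : H * X - X * H = X) (hYX : Y * X - X * Y = H)
    (v : M) (hYv : Y v = 0) (hHv : H v = ((ℓ : ℝ) + n) • v) :
    (∀ j k : ℕ, j ≤ k →
      (Y ^ j) ((X ^ k) v)
        = ((1 / 2 ^ j : ℝ) * (∏ i ∈ range j, ((k : ℝ) - i))
            * ∏ i ∈ range j, (2 * (n : ℝ) + 2 * ℓ + k - 1 - i)) • ((X ^ (k - j)) v))
    ∧ ∀ j k : ℕ, k < j → (Y ^ j) ((X ^ k) v) = 0 :=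
  monogenic_pow_Y_pow_X_general X Y H n ℓ hHX hYX v hYv hHv
end

section
/- Suppose m_0, m_1, ..., m_k are vectors with Y m_i = 0 and H m_i = (i + n) m_i (symplectic monogenics of degrees 0,...,k), where X, Y, H satisfy [H,Y] = −Y, [H,X] = X, [Y,X] = H and n ≥ 1. If Σ_{i=0}^k X^{k−i} m_i = 0, then X^{k−i} m_i = 0 for each i (hence m_i = 0 for each i by injectivity of X on these modules). In other words, the decomposition of a homogeneous polynomial of degree k into monogenic components p = Σ_{i=0}^k X_s^{k−i} m_i with m_i ∈ M_i is unique. -/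
/-!
Applying `Y ^ (k - i)` isolates the `i`-th summand: by the commutation relations `Y` lowers
`X ^ p m_j` to a multiple of `X ^ (p - 1) m_j`, so `Y ^ (k - i)` kills `X ^ (k - j) m_j` for
`j > i` and, as the weight `i + n` is positive, sends `X ^ (k - i) m_i` to a positive multiple
of `m_i`. Induction on `i` removes the summands with `j < i`.
-/

open Finset

namespace Module.End

variable {M : Type*} [AddCommGroup M] [Module ℝ M] {X Y H : Module.End ℝ M} {μ : ℝ} {m : M}

theorem apply_pow_apply_of_sub_eq_self (hHX : H * X - X * H = X) (hH : H m = μ • m) (p : ℕ) :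
    H ((X ^ p) m) = (μ + p) • (X ^ p) m := by
  induction p with
  | zero => simpa using hH
  | succ p ih =>
    have hcomm : H (X ((X ^ p) m)) = X (H ((X ^ p) m)) + X ((X ^ p) m) := by
      simpa [mul_apply, add_comm] using congr($(eq_add_of_sub_eq hHX) ((X ^ p) m))
    rw [pow_succ', mul_apply, hcomm, ih, map_smul]
    push_cast
    module

theorem apply_pow_succ_apply_of_lowestWeight (hHX : H * X - X * H = X)
    (hYX : Y * X - X * Y = H) (hH : H m = μ • m) (hY : Y m = 0) (p : ℕ) :
    Y ((X ^ (p + 1)) m) = (((p : ℝ) + 1) * (μ + p / 2)) • (X ^ p) m := by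
  have hcomm (v : M) : Y (X v) = X (Y v) + H v := by
    simpa [mul_apply, add_comm] using congr($(eq_add_of_sub_eq hYX) v)
  induction p with
  | zero => simp [hcomm, hY, hH]
  | succ p ih =>
    rw [pow_succ', mul_apply, hcomm, ih, map_smul, apply_pow_apply_of_sub_eq_self hHX hH,
      ← mul_apply, ← pow_succ']
    push_cast
    module

theorem pow_apply_pow_add_apply_of_lowestWeight (hHX : H * X - X * H = X)
    (hYX : Y * X - X * Y = H) (hH : H m = μ • m) (hY : Y m = 0) (p j : ℕ) :
    (Y ^ j) ((X ^ (p + j)) m) =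
      (∏ t ∈ range j, (((p + t : ℕ) : ℝ) + 1) * (μ + (p + t : ℕ) / 2)) • (X ^ p) m := by
  induction j with
  | zero => simp
  | succ j ih =>
    rw [pow_succ, mul_apply, ← add_assoc, apply_pow_succ_apply_of_lowestWeight hHX hYX hH hY,
      map_smul, ih, smul_smul, prod_range_succ, mul_comm]

theorem pow_apply_pow_apply_eq_zero_of_lt (hHX : H * X - X * H = X)
    (hYX : Y * X - X * Y = H) (hH : H m = μ • m) (hY : Y m = 0) {p j : ℕ} (hpj : p < j) :
    (Y ^ j) ((X ^ p) m) = 0 := by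
  obtain ⟨r, rfl⟩ := Nat.exists_eq_add_of_lt hpj
  have hself := pow_apply_pow_add_apply_of_lowestWeight hHX hYX hH hY 0 p
  rw [zero_add] at hself
  rw [show p + r + 1 = r + 1 + p by ring, pow_add, pow_succ, mul_apply, mul_apply, hself,
    map_smul, pow_zero, one_apply, hY, smul_zero, map_zero]

theorem exists_pos_pow_apply_pow_apply_of_lowestWeight (hHX : H * X - X * H = X)
    (hYX : Y * X - X * Y = H) (hH : H m = μ • m) (hY : Y m = 0) (hμ : 0 < μ) (p : ℕ) :
    ∃ c : ℝ, 0 < c ∧ (Y ^ p) ((X ^ p) m) = c • m := by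
  refine ⟨_, ?_, by simpa using pow_apply_pow_add_apply_of_lowestWeight hHX hYX hH hY 0 p⟩
  positivity

end Module.End

open Module.End in
theorem monogenic_decomposition_unique_general {M : Type*} [AddCommGroup M] [Module ℝ M]
    (X Y H : Module.End ℝ M) (n k : ℕ) (hn : 1 ≤ n)
    (hHX : H * X - X * H = X) (hYX : Y * X - X * Y = H)
    (m : Fin (k + 1) → M)
    (hYm : ∀ i, Y (m i) = 0)
    (hHm : ∀ i : Fin (k + 1), H (m i) = ((i : ℝ) + n) • m i)
    (hsum : ∑ i : Fin (k + 1), (X ^ (k - i.1)) (m i) = 0) :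
    ∀ i : Fin (k + 1), (X ^ (k - i.1)) (m i) = 0 ∧ m i = 0 := by
  have hweight (i : Fin (k + 1)) : 0 < (i : ℝ) + n := by
    have : (1 : ℝ) ≤ n := by exact_mod_cast hn
    positivity
  have hm (i : Fin (k + 1)) : m i = 0 := by
    induction i using WellFoundedLT.induction with
    | ind i ih =>
      have hisolate : (Y ^ (k - i.1)) (∑ j, (X ^ (k - j.1)) (m j)) =
          (Y ^ (k - i.1)) ((X ^ (k - i.1)) (m i)) := by
        rw [map_sum]
        refine sum_eq_single i (fun j _ hji => ?_) (by simp)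
        rcases lt_or_gt_of_ne hji with hlt | hgt
        · rw [ih j hlt, map_zero, map_zero]
        · exact pow_apply_pow_apply_eq_zero_of_lt hHX hYX (hHm j) (hYm j) (by omega)
      obtain ⟨c, hc, hci⟩ := exists_pos_pow_apply_pow_apply_of_lowestWeight hHX hYX (hHm i)
        (hYm i) (hweight i) (k - i.1)
      rw [hsum, map_zero, hci] at hisolate
      exact (smul_eq_zero.mp hisolate.symm).resolve_left hc.ne'
  exact fun i => ⟨by rw [hm i, map_zero], hm i⟩

/-- with `X, Y, H` satisfying `[H,Y] = −Y`, `[H,X] = X`, `[Y,X] = H` and `n ≥ 1`,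
if `m_0, …, m_k` are symplectic monogenics of degrees `0, …, k` (`Y m_i = 0`,
`H m_i = (i + n) m_i`) and `Σ_{i=0}^k X^{k−i} m_i = 0`, then each summand `X^{k−i} m_i = 0`
and hence each `m_i = 0`: the decomposition of a homogeneous polynomial of degree `k` into
monogenic components is unique. -/
theorem monogenic_decomposition_unique {M : Type*} [AddCommGroup M] [Module ℝ M]
    (X Y H : Module.End ℝ M) (n k : ℕ) (hn : 1 ≤ n)
    (hHY : H * Y - Y * H = -Y) (hHX : H * X - X * H = X) (hYX : Y * X - X * Y = H)
    (m : Fin (k + 1) → M)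
    (hYm : ∀ i, Y (m i) = 0)
    (hHm : ∀ i : Fin (k + 1), H (m i) = ((i : ℝ) + n) • m i)
    (hsum : ∑ i : Fin (k + 1), (X ^ (k - i.1)) (m i) = 0) :
    ∀ i : Fin (k + 1), (X ^ (k - i.1)) (m i) = 0 ∧ m i = 0 :=
  monogenic_decomposition_unique_general X Y H n k hn hHX hYX m hYm hHm hsum
end

section
/- Let X, Y, H satisfy [H,Y] = −Y, [H,X] = X, [Y,X] = H with n ≥ 1 a fixed integer, and set Γ = X Y − (1/2)(H − n)(H + n − 1). If v satisfies Y v = 0 and H v = (k + n) v (a symplectic monogenic of degree k), then Γ v = −(1/2) k (2n − 1 + k) v. Moreover, for any j ≥ 0, Γ (X^j v) = −(1/2) k (2n − 1 + k) X^j v; i.e. the Casimir-type operator Γ_s acts on the summand X_s^j M_k of the Fischer decomposition by the scalar −(1/2) k (2n − 1 + k). -/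
/-!
From `[H,X] = X` and `[Y,X] = H`, the commutator of `(H - c)(H + c - 1)` with `X` is `2XH` and that
of `XY` with `X` is `XH`, so `Γ` commutes with `X`, hence with every `X ^ j`. On a vector killed by
`Y` with `H`-eigenvalue `μ`, `Γ` acts by `-½ (μ - c)(μ + c - 1)`; take `c = n`, `μ = k + n`.
-/

section

variable {𝕜 A : Type*} [Field 𝕜] [Ring A] [Algebra 𝕜 A]

def casimir (X Y H : A) (c : 𝕜) : A :=
  X * Y - (1 / 2 : 𝕜) • ((H - c • 1) * (H + (c - 1) • 1))

theorem casimir_mul_sub_mul_casimir [NeZero (2 : 𝕜)] (X Y H : A) (c : 𝕜) :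
    casimir X Y H c * X - X * casimir X Y H c =
      X * (Y * X - X * Y - H) - (1 / 2 : 𝕜) • ((H * X - X * H - X) +
        (H - c • 1) * (H * X - X * H - X) + (H * X - X * H - X) * (H + (c - 1) • 1)) := by
  simp only [casimir, mul_add, add_mul, mul_sub, sub_mul, smul_mul_assoc, mul_smul_comm,
    mul_assoc, one_mul, mul_one]
  match_scalars <;> field_simp <;> ring

theorem commute_casimir [NeZero (2 : 𝕜)] {X Y H : A} (c : 𝕜)
    (hHX : H * X - X * H = X) (hYX : Y * X - X * Y = H) :
    Commute (casimir X Y H c) X := by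
  have key := casimir_mul_sub_mul_casimir X Y H c
  rw [sub_eq_zero.mpr hYX, sub_eq_zero.mpr hHX] at key
  exact sub_eq_zero.mp (by simpa using key)

theorem casimir_apply_of_apply_eq_zero_of_apply_eq_smul {M : Type*} [AddCommGroup M] [Module 𝕜 M]
    {X Y H : Module.End 𝕜 M} (c μ : 𝕜) {v : M} (hYv : Y v = 0) (hHv : H v = μ • v) :
    casimir X Y H c v = (-(1 / 2 : 𝕜) * (μ - c) * (μ + c - 1)) • v := by
  simp only [casimir, LinearMap.sub_apply, Module.End.mul_apply, LinearMap.smul_apply,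
    LinearMap.add_apply, Module.End.one_apply, map_add, map_smul, hYv, hHv, map_zero]
  module

end

theorem casimir_eigenvalue_on_monogenic_general {M : Type*} [AddCommGroup M] [Module ℝ M]
    (X Y H : Module.End ℝ M) (n k : ℕ)
    (hHX : H * X - X * H = X) (hYX : Y * X - X * Y = H)
    (v : M) (hYv : Y v = 0) (hHv : H v = ((k : ℝ) + n) • v) :
    (X * Y - (1 / 2 : ℝ) • ((H - (n : ℝ) • 1) * (H + ((n : ℝ) - 1) • 1))) v
        = (-(1 / 2 : ℝ) * k * (2 * n - 1 + k)) • v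
      ∧ ∀ j : ℕ,
        (X * Y - (1 / 2 : ℝ) • ((H - (n : ℝ) • 1) * (H + ((n : ℝ) - 1) • 1))) ((X ^ j) v)
          = (-(1 / 2 : ℝ) * k * (2 * n - 1 + k)) • ((X ^ j) v) := by
  change casimir X Y H (n : ℝ) v = _ ∧ ∀ j : ℕ, casimir X Y H (n : ℝ) ((X ^ j) v) = _
  have hv : casimir X Y H (n : ℝ) v = (-(1 / 2 : ℝ) * k * (2 * n - 1 + k)) • v := by
    rw [casimir_apply_of_apply_eq_zero_of_apply_eq_smul _ _ hYv hHv]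
    congr 1
    ring
  refine ⟨hv, fun j => ?_⟩
  rw [← Module.End.mul_apply, ((commute_casimir _ hHX hYX).pow_right j).eq, Module.End.mul_apply,
    hv, map_smul]

/-- with `X, Y, H` satisfying `[H,Y] = −Y`, `[H,X] = X`, `[Y,X] = H`, `n ≥ 1`,
and `Γ = X Y − ½ (H − n)(H + n − 1)` (i.e. `Γ_s = X_s D_s − ½ E (2n − 1 + E)` with
`E = H − n`), if `Y v = 0` and `H v = (k + n) v` then `Γ v = −½ k (2n − 1 + k) v`, and
moreover `Γ (X^j v) = −½ k (2n − 1 + k) X^j v` for all `j ≥ 0`. -/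
theorem casimir_eigenvalue_on_monogenic {M : Type*} [AddCommGroup M] [Module ℝ M]
    (X Y H : Module.End ℝ M) (n k : ℕ) (hn : 1 ≤ n)
    (hHY : H * Y - Y * H = -Y) (hHX : H * X - X * H = X) (hYX : Y * X - X * Y = H)
    (v : M) (hYv : Y v = 0) (hHv : H v = ((k : ℝ) + n) • v) :
    (X * Y - (1 / 2 : ℝ) • ((H - (n : ℝ) • 1) * (H + ((n : ℝ) - 1) • 1))) v
        = (-(1 / 2 : ℝ) * k * (2 * n - 1 + k)) • v
      ∧ ∀ j : ℕ,
        (X * Y - (1 / 2 : ℝ) • ((H - (n : ℝ) • 1) * (H + ((n : ℝ) - 1) • 1))) ((X ^ j) v)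
          = (-(1 / 2 : ℝ) * k * (2 * n - 1 + k)) • ((X ^ j) v) :=
  casimir_eigenvalue_on_monogenic_general X Y H n k hHX hYX v hYv hHv
end

section
/- Fix integers k ≥ 0 and 0 ≤ i ≤ k, and n ≥ 1. Define the operator π^k_i = Σ_{j=0}^{k−i} a^{i,k}_j X^{i+j} Y^{i+j}, where a^{i,k}_j = (−1)^j (2n+2k−2i−1) · (2^{i+j}/(i! j!)) · (2n+2k−2i−j−2)!/(2n+2k−i−1)!. Then for every symplectic monogenic m of degree k − p (i.e. Y m = 0, H m = (k−p+n) m) with 0 ≤ p ≤ k, one has π^k_i (X^p m) = δ_{i p} X^i m. -/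
/-!
If `Y m = 0` and `H m = δ • m`, the relations give
`Y X^(t+1) m = ((t+1)(2δ+t)/2) • X^t m`, hence
`Y^s X^(r+s) m = c • X^r m` with `c = (r+1)_s (2δ+r)_s / 2^s` (rising factorials), while
`Y^s X^p m = 0` for `s > p`. So `π^k_i (X^p m)` is a scalar multiple of `X^p m`, which vanishes
for `p < i`. For `p = i + q` the scalar is a constant times
`∑_j (-1)^j (q choose j) (2δ + q - j)_(q-1)`, a `q`-th finite difference of a polynomial of
degree `q - 1`; it vanishes unless `q = 0`, where the single term equals `1`.
-/

open Finset
open scoped Nat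

theorem sum_range_neg_one_pow_mul_choose_mul_eval_eq_zero {R : Type*} [CommRing R]
    {P : Polynomial R} {q : ℕ} (hP : P.natDegree < q) (x : R) :
    ∑ j ∈ range (q + 1), (-1) ^ j * q.choose j * P.eval (x + (q - j : ℕ)) = 0 := by
  have h := congr_fun (Polynomial.fwdDiff_iter_eq_zero_of_degree_lt hP) x
  rw [fwdDiff_iter_eq_sum_shift, ← sum_range_reflect, Pi.zero_apply] at h
  rw [← h]
  refine sum_congr rfl fun j hj => ?_
  have hjq : j ≤ q := Nat.lt_succ_iff.mp (mem_range.mp hj)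
  rw [add_tsub_cancel_right, Nat.sub_sub_self hjq, Nat.choose_symm hjq, nsmul_one, zsmul_eq_mul]
  push_cast
  ring

theorem ascPochhammer_eval_natCast_add_one {K : Type*} [Field K] [CharZero K] (r s : ℕ) :
    (ascPochhammer K s).eval ((r : K) + 1) = (r + s)! / r ! := by
  rw [← factorial_mul_ascPochhammer,
    mul_div_cancel_left₀ _ (by exact_mod_cast r.factorial_ne_zero)]

-- The paper's `c_{s, r+s, ℓ}` for `δ = n + ℓ`.
noncomputable def ladderCoeff (δ : ℝ) (r s : ℕ) : ℝ :=
  (ascPochhammer ℝ s).eval ((r : ℝ) + 1) * (ascPochhammer ℝ s).eval (2 * δ + r) / 2 ^ s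

section LowestWeight

variable {M : Type*} [AddCommGroup M] [Module ℝ M] {X Y H : Module.End ℝ M} {m : M} {δ : ℝ}

theorem H_X_pow_apply (hHX : H * X - X * H = X) (hHm : H m = δ • m) (t : ℕ) :
    H ((X ^ t) m) = (δ + t) • (X ^ t) m := by
  have hHX' : ∀ v, H (X v) = X (H v) + X v := fun v => by
    simpa using LinearMap.congr_fun (sub_eq_iff_eq_add'.mp hHX) v
  induction t with
  | zero => simpa using hHm
  | succ t ih =>
    rw [pow_succ', Module.End.mul_apply, hHX', ih, map_smul]
    push_cast
    module

theorem Y_X_pow_succ_apply (hHX : H * X - X * H = X) (hYX : Y * X - X * Y = H)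
    (hYm : Y m = 0) (hHm : H m = δ • m) (t : ℕ) :
    Y ((X ^ (t + 1)) m) = ((t + 1) * (2 * δ + t) / 2) • (X ^ t) m := by
  have hYX' : ∀ v, Y (X v) = X (Y v) + H v := fun v => by
    simpa using LinearMap.congr_fun (sub_eq_iff_eq_add'.mp hYX) v
  induction t with
  | zero => simp [hYX', hYm, hHm]
  | succ t ih =>
    rw [pow_succ', Module.End.mul_apply, hYX', ih, map_smul, H_X_pow_apply hHX hHm,
      ← Module.End.mul_apply X, ← pow_succ', ← add_smul]
    congr 1
    push_cast
    ring

theorem Y_pow_X_pow_add_apply (hHX : H * X - X * H = X) (hYX : Y * X - X * Y = H)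
    (hYm : Y m = 0) (hHm : H m = δ • m) (r s : ℕ) :
    (Y ^ s) ((X ^ (r + s)) m) = ladderCoeff δ r s • (X ^ r) m := by
  induction s with
  | zero => simp [ladderCoeff]
  | succ s ih =>
    rw [pow_succ, Module.End.mul_apply, ← add_assoc, Y_X_pow_succ_apply hHX hYX hYm hHm,
      map_smul, ih, smul_smul, ladderCoeff, ladderCoeff, ascPochhammer_succ_eval,
      ascPochhammer_succ_eval]
    push_cast
    congr 1
    ring

theorem Y_pow_X_pow_apply_of_lt (hHX : H * X - X * H = X) (hYX : Y * X - X * Y = H)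
    (hYm : Y m = 0) (hHm : H m = δ • m) {p s : ℕ} (hps : p < s) :
    (Y ^ s) ((X ^ p) m) = 0 := by
  obtain ⟨e, rfl⟩ := Nat.exists_eq_add_of_lt hps
  have hYpXp := Y_pow_X_pow_add_apply hHX hYX hYm hHm 0 p
  rw [zero_add] at hYpXp
  rw [show p + e + 1 = e + 1 + p by ring, pow_add, Module.End.mul_apply, hYpXp, map_smul,
    pow_succ, Module.End.mul_apply, pow_zero, Module.End.one_apply, hYm, map_zero, smul_zero]

theorem X_pow_mul_Y_pow_X_pow_add_apply (hHX : H * X - X * H = X) (hYX : Y * X - X * Y = H)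
    (hYm : Y m = 0) (hHm : H m = δ • m) (r s : ℕ) :
    (X ^ s * Y ^ s) ((X ^ (r + s)) m) = ladderCoeff δ r s • (X ^ (r + s)) m := by
  rw [Module.End.mul_apply, Y_pow_X_pow_add_apply hHX hYX hYm hHm, map_smul,
    ← Module.End.mul_apply, ← pow_add, add_comm s]

end LowestWeight

-- The paper's `a^{i,k}_j`.
noncomputable def fischerCoeff (n k i j : ℕ) : ℝ :=
  (-1 : ℝ) ^ j * (2 * (n : ℝ) + 2 * k - 2 * i - 1) * 2 ^ (i + j) / (i.factorial * j.factorial)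
    * ((2 * n + 2 * k - 2 * i - j - 2).factorial : ℝ) / ((2 * n + 2 * k - i - 1).factorial : ℝ)

theorem fischerCoeff_mul_ladderCoeff {n k c i j u q : ℕ} (hq : j + u = q)
    (h : n + k = c + 1 + i + q) :
    fischerCoeff n k i j * ladderCoeff (c + 1) u (i + j)
      = (2 * c + 2 * q + 1) * (i + q)! * (2 * c + q + i + 1)!
          / (i ! * q ! * (2 * c + 2 * q + i + 1)!)
        * ((-1) ^ j * q.choose j * ((2 * c + q + u)! / (2 * c + u + 1)!)) := by
  have hnk : (n : ℝ) + k = c + 1 + i + q := by exact_mod_cast h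
  have hlow : 2 * n + 2 * k - 2 * i - j - 2 = 2 * c + q + u := by omega
  have htop : 2 * n + 2 * k - i - 1 = 2 * c + 2 * q + i + 1 := by omega
  have hev₁ := ascPochhammer_eval_natCast_add_one (K := ℝ) u (i + j)
  have hev₂ := ascPochhammer_eval_natCast_add_one (K := ℝ) (2 * c + u + 1) (i + j)
  rw [show u + (i + j) = i + q by omega] at hev₁
  rw [show 2 * c + u + 1 + (i + j) = 2 * c + q + i + 1 by omega] at hev₂
  push_cast at hev₂
  rw [fischerCoeff, ladderCoeff, hlow, htop, Nat.cast_choose ℝ (show j ≤ q by omega),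
    show q - j = u by omega, hev₁, show 2 * ((c : ℝ) + 1) + u = 2 * c + u + 1 + 1 by ring,
    hev₂,
    show (2 * n + 2 * k - 2 * i - 1 : ℝ) = 2 * c + 2 * q + 1 by linarith]
  field_simp

theorem sum_fischerCoeff_mul_ladderCoeff {n k c i q : ℕ} (h : n + k = c + 1 + i + q) :
    ∑ j ∈ range (q + 1), fischerCoeff n k i j * ladderCoeff (c + 1) (q - j) (i + j)
      = if q = 0 then 1 else 0 := by
  rw [sum_congr rfl fun j hj =>
    fischerCoeff_mul_ladderCoeff (Nat.add_sub_cancel' (Nat.lt_succ_iff.mp (mem_range.mp hj))) h,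
    ← mul_sum]
  rcases q with _ | Q
  · rw [if_pos rfl, sum_range_one, Nat.choose_self, Nat.factorial_succ (2 * c)]
    push_cast
    simp only [mul_zero, add_zero, Nat.factorial_zero, Nat.cast_one, mul_one, pow_zero, one_mul]
    field_simp
  · rw [if_neg (Nat.succ_ne_zero Q), mul_eq_zero]
    right
    rw [← sum_range_neg_one_pow_mul_choose_mul_eval_eq_zero (P := ascPochhammer ℝ Q)
      (q := Q + 1) (by simp) (2 * c + 2 : ℝ)]
    refine sum_congr rfl fun j _ => ?_
    rw [show 2 * c + (Q + 1) + (Q + 1 - j) = 2 * c + (Q + 1 - j) + 1 + Q by omega,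
      ← ascPochhammer_eval_natCast_add_one]
    congr 2
    push_cast
    ring

theorem fischer_projection_general {M : Type*} [AddCommGroup M] [Module ℝ M]
    (X Y H : Module.End ℝ M) (n k i : ℕ) (hn : 1 ≤ n)
    (hHX : H * X - X * H = X) (hYX : Y * X - X * Y = H) :
    ∀ p ≤ k, ∀ m : M, Y m = 0 → H m = (((k - p : ℕ) : ℝ) + n) • m →
      ∑ j ∈ range (k - i + 1),
          ((-1 : ℝ) ^ j * (2 * (n : ℝ) + 2 * k - 2 * i - 1) * 2 ^ (i + j)
              / (i.factorial * j.factorial)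
              * ((2 * n + 2 * k - 2 * i - j - 2).factorial : ℝ)
              / ((2 * n + 2 * k - i - 1).factorial : ℝ))
            • ((X ^ (i + j) * Y ^ (i + j)) ((X ^ p) m))
        = if i = p then (X ^ i) m else 0 := by
  intro p hpk m hYm hHm
  change ∑ j ∈ range (k - i + 1), fischerCoeff n k i j • _ = _
  rcases lt_or_ge p i with hpi | hip
  · rw [if_neg hpi.ne']
    refine sum_eq_zero fun j _ => ?_
    rw [Module.End.mul_apply, Y_pow_X_pow_apply_of_lt hHX hYX hYm hHm (by omega), map_zero,
      smul_zero]
  obtain ⟨q, rfl⟩ := Nat.exists_eq_add_of_le hip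
  obtain ⟨c, hc⟩ : ∃ c, k - (i + q) + n = c + 1 := ⟨k - (i + q) + n - 1, by omega⟩
  rw [show ((k - (i + q) : ℕ) : ℝ) + n = c + 1 by exact_mod_cast hc] at hHm
  have hrange : range (q + 1) ⊆ range (k - i + 1) := range_subset_range.mpr (by omega)
  have hvanish : ∀ j ∈ range (k - i + 1), j ∉ range (q + 1) →
      fischerCoeff n k i j • (X ^ (i + j) * Y ^ (i + j)) ((X ^ (i + q)) m) = 0 := by
    intro j _ hj
    rw [mem_range, not_lt] at hj
    rw [Module.End.mul_apply, Y_pow_X_pow_apply_of_lt hHX hYX hYm hHm (by omega), map_zero,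
      smul_zero]
  have hterm : ∀ j ∈ range (q + 1),
      fischerCoeff n k i j • (X ^ (i + j) * Y ^ (i + j)) ((X ^ (i + q)) m)
        = (fischerCoeff n k i j * ladderCoeff (c + 1) (q - j) (i + j)) • (X ^ (i + q)) m := by
    intro j hj
    rw [show i + q = q - j + (i + j) by rw [mem_range] at hj; omega,
      X_pow_mul_Y_pow_X_pow_add_apply hHX hYX hYm hHm, smul_smul]
  rw [← sum_subset hrange hvanish, sum_congr rfl hterm, ← sum_smul,
    sum_fischerCoeff_mul_ladderCoeff (by omega)]
  rcases q with _ | q <;> simp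

/-- with `X = X_s`, `Y = D_s`, `H = E + n` satisfying `[H,Y] = −Y`, `[H,X] = X`,
`[Y,X] = H`, `n ≥ 1`, and `0 ≤ i ≤ k`, the projection operator
`π^k_i = Σ_{j=0}^{k−i} a^{i,k}_j X^{i+j} Y^{i+j}` with
`a^{i,k}_j = (−1)^j (2n+2k−2i−1) · 2^{i+j}/(i! j!) · (2n+2k−2i−j−2)!/(2n+2k−i−1)!`
satisfies `π^k_i (X^p m) = δ_{ip} X^i m` for every symplectic monogenic `m` of degree
`k − p` (`Y m = 0`, `H m = (k−p+n) m`), `0 ≤ p ≤ k`. -/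
theorem fischer_projection {M : Type*} [AddCommGroup M] [Module ℝ M]
    (X Y H : Module.End ℝ M) (n k i : ℕ) (hn : 1 ≤ n) (hik : i ≤ k)
    (hHY : H * Y - Y * H = -Y) (hHX : H * X - X * H = X) (hYX : Y * X - X * Y = H) :
    ∀ p ≤ k, ∀ m : M, Y m = 0 → H m = (((k - p : ℕ) : ℝ) + n) • m →
      ∑ j ∈ range (k - i + 1),
          ((-1 : ℝ) ^ j * (2 * (n : ℝ) + 2 * k - 2 * i - 1) * 2 ^ (i + j)
              / (i.factorial * j.factorial)
              * ((2 * n + 2 * k - 2 * i - j - 2).factorial : ℝ)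
              / ((2 * n + 2 * k - i - 1).factorial : ℝ))
            • ((X ^ (i + j) * Y ^ (i + j)) ((X ^ p) m))
        = if i = p then (X ^ i) m else 0 :=
  fischer_projection_general X Y H n k i hn hHX hYX
end
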